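/- Let (f_n)_{n∈ℕ} be a sequence in a separable complex Hilbert space H. Then (f_n) is a normalized tight (Parseval) frame for H if and only if there exist a complex Hilbert space K, a linear isometry i : H → K, and an orthonormal basis (e_n)_{n∈ℕ} of K such that P e_n = i(f_n) for all n, where P is the orthogonal projection of K onto the range of i. -/

import Mathlib

/-! The analysis operator `x ↦ (⟪fₙ, x⟫)ₙ` of a Parseval frame is an isometry `i : H → ℓ²`, and
for every `z` we have `⟪δₙ, i z⟫ = ⟪fₙ, z⟫ = ⟪i fₙ, i z⟫`, i.e. `δₙ - i fₙ ⊥ range i`: the orthogonal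
projection onto `range i` sends the standard basis vector `δₙ` to `i fₙ`. Conversely, since `P` is
self-adjoint and fixes `range i`, `⟪x, fₙ⟫ = ⟪i x, P eₙ⟫ = ⟪i x, eₙ⟫`, so Parseval's identity for
the basis `(eₙ)` at `i x` is the frame identity at `x`. -/

noncomputable section

/-- A dilation witness for a sequence `f` in `H`: a complex Hilbert space `K`,
a linear isometry `i : H → K`, an orthonormal basis `(eₙ)` of `K`, and the
orthogonal projection `P` of `K` onto the range of `i` (a self-adjoint
idempotent with range equal to the range of `i`) such that `P eₙ = i (fₙ)`
for all `n`. -/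
structure ParsevalDilation {H : Type} [NormedAddCommGroup H]
    [InnerProductSpace ℂ H] (f : ℕ → H) where
  K : Type
  [instNormedAddCommGroup : NormedAddCommGroup K]
  [instInnerProductSpace : InnerProductSpace ℂ K]
  [instCompleteSpace : CompleteSpace K]
  i : H →ₗᵢ[ℂ] K
  e : HilbertBasis ℕ ℂ K
  P : K →L[ℂ] K
  selfAdjoint : IsSelfAdjoint P
  idempotent : ∀ x : K, P (P x) = P x
  range_eq : Set.range P = Set.range i
  proj_basis : ∀ n : ℕ, P (e n) = i (f n)

open scoped InnerProductSpace lp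

section

variable {𝕜 ι E F : Type*} [RCLike 𝕜] [NormedAddCommGroup E] [InnerProductSpace 𝕜 E]
  [NormedAddCommGroup F] [InnerProductSpace 𝕜 F]

variable (𝕜) in
def IsParsevalFrame (f : ι → E) : Prop :=
  ∀ x : E, ∑' i, ‖⟪x, f i⟫_𝕜‖ ^ 2 = ‖x‖ ^ 2

theorem lp.norm_sq_eq_tsum {G : ι → Type*} [∀ i, NormedAddCommGroup (G i)] (g : lp G 2) :
    ‖g‖ ^ 2 = ∑' i, ‖g i‖ ^ 2 := by
  simpa using lp.norm_rpow_eq_tsum (p := 2) (by norm_num) g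

theorem HilbertBasis.isParsevalFrame [CompleteSpace E] (b : HilbertBasis ι 𝕜 E) :
    IsParsevalFrame 𝕜 b := by
  intro x
  simp_rw [norm_inner_symm x, ← b.repr_apply_apply, ← b.repr.norm_map x, lp.norm_sq_eq_tsum]

theorem IsParsevalFrame.memℓp_inner {f : ι → E} (hf : IsParsevalFrame 𝕜 f) (x : E) :
    Memℓp (fun i => ⟪f i, x⟫_𝕜) 2 := by
  by_cases hx : x = 0
  · simp only [hx, inner_zero_right]
    exact zero_memℓp
  refine memℓp_gen ?_
  have hsum : Summable fun i => ‖⟪x, f i⟫_𝕜‖ ^ 2 := by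
    -- otherwise `∑'` returns its junk value `0`, forcing `‖x‖ = 0`
    by_contra hns
    have := hf x
    rw [tsum_eq_zero_of_not_summable hns] at this
    exact hx (norm_eq_zero.1 (pow_eq_zero_iff two_ne_zero |>.1 this.symm))
  simpa [norm_inner_symm x] using hsum

def IsParsevalFrame.analysisOperator {f : ι → E} (hf : IsParsevalFrame 𝕜 f) :
    E →ₗᵢ[𝕜] ℓ²(ι, 𝕜) where
  toFun x := ⟨fun i => ⟪f i, x⟫_𝕜, hf.memℓp_inner x⟩
  map_add' x y := by ext i; exact inner_add_right _ _ _
  map_smul' c x := by ext i; simp [inner_smul_right]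
  norm_map' x := by
    rw [← sq_eq_sq₀ (norm_nonneg _) (norm_nonneg _), lp.norm_sq_eq_tsum, ← hf x]
    simp_rw [norm_inner_symm x]
    rfl

instance LinearIsometry.completeSpace_range [CompleteSpace E] (i : E →ₗᵢ[𝕜] F) :
    CompleteSpace (LinearMap.range i.toLinearMap) :=
  i.isometry.isUniformInducing.isComplete_range.completeSpace_coe

theorem LinearIsometry.starProjection_range_eq [CompleteSpace E] (i : E →ₗᵢ[𝕜] F) {y : F} {v : E}
    (h : ∀ z, ⟪y, i z⟫_𝕜 = ⟪v, z⟫_𝕜) :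
    (LinearMap.range i.toLinearMap).starProjection y = i v := by
  refine Submodule.eq_starProjection_of_mem_of_inner_eq_zero ⟨v, rfl⟩ ?_
  rintro _ ⟨z, rfl⟩
  rw [inner_sub_left, LinearIsometry.coe_toLinearMap, h, i.inner_map_map, sub_self]

end

section

variable {H : Type} [NormedAddCommGroup H] [InnerProductSpace ℂ H] {f : ℕ → H}

def ParsevalDilation.ofIsometry [CompleteSpace H] {K : Type} [NormedAddCommGroup K]
    [InnerProductSpace ℂ K] [CompleteSpace K] (i : H →ₗᵢ[ℂ] K) (e : HilbertBasis ℕ ℂ K)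
    (he : ∀ n z, ⟪e n, i z⟫_ℂ = ⟪f n, z⟫_ℂ) : ParsevalDilation f where
  K := K
  i := i
  e := e
  P := (LinearMap.range i.toLinearMap).starProjection
  selfAdjoint := isSelfAdjoint_starProjection _
  idempotent x := congr($(Submodule.isIdempotentElem_starProjection _) x)
  range_eq := (LinearMap.coe_range _).symm.trans <|
    (congrArg SetLike.coe (Submodule.range_starProjection _)).trans (LinearMap.coe_range _)
  proj_basis n := i.starProjection_range_eq (he n)

def IsParsevalFrame.dilation [CompleteSpace H] (hf : IsParsevalFrame ℂ f) :
    ParsevalDilation f :=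
  .ofIsometry hf.analysisOperator default fun n z =>
    (HilbertBasis.repr_apply_apply _ (hf.analysisOperator z) n).symm

namespace ParsevalDilation

attribute [local instance] instNormedAddCommGroup instInnerProductSpace instCompleteSpace

theorem P_apply_i (d : ParsevalDilation f) (x : H) : d.P (d.i x) = d.i x := by
  obtain ⟨y, hy⟩ : d.i x ∈ Set.range d.P := d.range_eq ▸ Set.mem_range_self x
  rw [← hy, d.idempotent]

theorem inner_eq_inner_i_e (d : ParsevalDilation f) (x : H) (n : ℕ) :
    ⟪x, f n⟫_ℂ = ⟪d.i x, d.e n⟫_ℂ :=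
  calc ⟪x, f n⟫_ℂ = ⟪d.i x, d.P (d.e n)⟫_ℂ := by rw [d.proj_basis, d.i.inner_map_map]
    _ = ⟪d.P (d.i x), d.e n⟫_ℂ := (d.selfAdjoint.isSymmetric _ _).symm
    _ = ⟪d.i x, d.e n⟫_ℂ := by rw [d.P_apply_i]

theorem isParsevalFrame (d : ParsevalDilation f) : IsParsevalFrame ℂ f := fun x => by
  simp_rw [d.inner_eq_inner_i_e x, d.e.isParsevalFrame (d.i x), d.i.norm_map]

end ParsevalDilation

end

theorem parseval_iff_dilation_general
    {H : Type} [NormedAddCommGroup H] [InnerProductSpace ℂ H] [CompleteSpace H]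
    (f : ℕ → H) :
    (∀ x : H, ∑' n, ‖(inner ℂ x (f n) : ℂ)‖ ^ 2 = ‖x‖ ^ 2) ↔
      Nonempty (ParsevalDilation f) :=
  ⟨fun hf => ⟨IsParsevalFrame.dilation hf⟩, fun ⟨d⟩ => d.isParsevalFrame⟩

/-- `(fₙ)` is a normalized tight (Parseval) frame for `H` iff it is the image
of an orthonormal basis of a larger Hilbert space `K ⊇ H` under the orthogonal
projection of `K` onto (the isometric copy of) `H`. -/
theorem parseval_iff_dilation
    {H : Type} [NormedAddCommGroup H] [InnerProductSpace ℂ H] [CompleteSpace H]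
    [SecondCountableTopology H] (f : ℕ → H) :
    (∀ x : H, ∑' n, ‖(inner ℂ x (f n) : ℂ)‖ ^ 2 = ‖x‖ ^ 2) ↔
      Nonempty (ParsevalDilation f) :=
  parseval_iff_dilation_general f
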